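/- Let M be a nonempty connected compact metric space, ι a finite linearly ordered index type, and C : ι → Set M a family of closed subsets such that ⋃ i, C i = M and the family is nested, meaning that for all indices i < j either C j is a strict subset of C i or C i ∩ C j = ∅. Then there is exactly one index i₀ with C i₀ = M. -/

import Mathlib

/-!
Let `i₀` be the least index with `C i₀` nonempty. Nestedness forces every member of the family
to lie inside `C i₀` or to miss it, so the complement of `C i₀` is a finite union of closed
members; hence `C i₀` is clopen and, by connectedness, everything. Two distinct indices cannot
both carry the whole space, since a nonempty set is neither a strict subset of itself nor
disjoint from itself.
-/

open Set

def IsNested {α ι : Type*} [LinearOrder ι] (C : ι → Set α) : Prop :=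
  ∀ i j, i < j → C j ⊂ C i ∨ C i ∩ C j = ∅

namespace IsNested

variable {α ι : Type*} [LinearOrder ι] {C : ι → Set α}

theorem subset_or_disjoint_of_minimal (hC : IsNested C) {i₀ : ι}
    (hi₀ : Minimal (fun i ↦ (C i).Nonempty) i₀) (j : ι) :
    C j ⊆ C i₀ ∨ Disjoint (C j) (C i₀) := by
  rcases lt_trichotomy j i₀ with h | rfl | h
  · exact Or.inl fun x hx ↦ absurd ⟨x, hx⟩ (hi₀.not_prop_of_lt h)
  · exact Or.inl subset_rfl
  · rcases hC i₀ j h with hsub | hdisj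
    · exact Or.inl hsub.subset
    · rw [disjoint_iff_inter_eq_empty, inter_comm]
      exact Or.inr hdisj

theorem ne_of_lt (hC : IsNested C) {i j : ι} (hij : i < j) (hi : (C i).Nonempty) :
    C i ≠ C j := by
  intro heq
  rcases hC i j hij with hsub | hdisj
  · exact hsub.ne heq.symm
  · rw [← heq, inter_self] at hdisj
    exact hi.ne_empty hdisj

theorem injOn_nonempty (hC : IsNested C) : InjOn C {i | (C i).Nonempty} := by
  intro i hi j hj hij
  rcases lt_trichotomy i j with h | h | h
  · exact absurd hij (hC.ne_of_lt h hi)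
  · exact h
  · exact absurd hij.symm (hC.ne_of_lt h hj)

end IsNested

theorem isOpen_of_iUnion_eq_univ_of_subset_or_disjoint {X ι : Type*} [TopologicalSpace X]
    [Finite ι] {C : ι → Set X} {S : Set X} (hC : ∀ i, IsClosed (C i))
    (hcover : ⋃ i, C i = univ) (h : ∀ i, C i ⊆ S ∨ Disjoint (C i) S) : IsOpen S := by
  have hcompl : Sᶜ = ⋃ i, C i \ S := by rw [← iUnion_sdiff, hcover, compl_eq_univ_sdiff]
  rw [← isClosed_compl_iff, hcompl]
  refine isClosed_iUnion_of_finite fun i ↦ ?_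
  rcases h i with hsub | hdisj
  · rw [sdiff_eq_empty.2 hsub]
    exact isClosed_empty
  · rw [hdisj.sdiff_eq_left]
    exact hC i

theorem unique_root_region_general {M : Type*} [MetricSpace M]
    [ConnectedSpace M]
    {ι : Type*} [Fintype ι] [LinearOrder ι]
    (C : ι → Set M)
    (hclosed : ∀ i, IsClosed (C i))
    (hnest : ∀ i j, i < j → C j ⊂ C i ∨ C i ∩ C j = ∅)
    (hcover : ⋃ i, C i = Set.univ) :
    ∃! i₀ : ι, C i₀ = Set.univ := by
  have hsome : ∃ i, (C i).Nonempty := by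
    obtain ⟨i, hi⟩ := iUnion_eq_univ_iff.1 hcover (Classical.arbitrary M)
    exact ⟨i, _, hi⟩
  obtain ⟨i₀, hi₀⟩ := exists_minimal_of_wellFoundedLT _ hsome
  have hopen : IsOpen (C i₀) := isOpen_of_iUnion_eq_univ_of_subset_or_disjoint hclosed hcover
    (IsNested.subset_or_disjoint_of_minimal hnest hi₀)
  have hroot : C i₀ = univ := IsClopen.eq_univ ⟨hclosed i₀, hopen⟩ hi₀.prop
  refine ⟨i₀, hroot, fun j hj ↦ IsNested.injOn_nonempty hnest ?_ ?_ (hj.trans hroot.symm)⟩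
  · simp [hj]
  · simp [hroot]

/-- A finite nested family of closed sets covering a nonempty connected compact
metric space contains the whole space as its unique member equal to `M`
(the unique root region of a varilet lens). -/
theorem unique_root_region {M : Type*} [MetricSpace M] [CompactSpace M]
    [ConnectedSpace M] [Nonempty M]
    {ι : Type*} [Fintype ι] [LinearOrder ι]
    (C : ι → Set M)
    (hclosed : ∀ i, IsClosed (C i))
    (hnest : ∀ i j, i < j → C j ⊂ C i ∨ C i ∩ C j = ∅)
    (hcover : ⋃ i, C i = Set.univ) :
    ∃! i₀ : ι, C i₀ = Set.univ :=
  unique_root_region_general C hclosed hnest hcover
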